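/- Let φ, ψ be Hausdorff functions satisfying ψ(2ε) ≤ C·φ(ε) for all ε > 0 and some constant C > 0, with φ(ε) → 0 as ε → 0. Then there exists a compact ultrametric space K (a compact product in E) with a probability measure μ such that both the φ-Hausdorff measure of K and the ψ-packing measure of K are finite and positive; indeed D̄^φ_μ · H^φ(K) = 1 = D̲^ψ_μ · P^ψ(K), where D̄^φ_μ and D̲^ψ_μ are the (constant) upper φ-density and lower ψ-density of μ. -/

import Mathlib

open scoped Classical ENNReal
open Filter Topology MeasureTheory

/-- The minimal index (counting from 1) at which two elements of the compact product
`K = ∏_k {1,…,n k}` differ. -/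
noncomputable def chiK {n : ℕ → ℕ} (x y : ∀ k, Fin (n k)) : ℕ := sInf {k | x k ≠ y k} + 1

/-- The ultrametric `δ(x,y) = 2^{-χ(x,y)}` on the compact product. -/
noncomputable def deltaK {n : ℕ → ℕ} (x y : ∀ k, Fin (n k)) : ℝ :=
  if x = y then 0 else (2 : ℝ) ^ (-(chiK x y : ℤ))

/-- The open `δ`-ball of center `x` and radius `ε`. -/
def BallK {n : ℕ → ℕ} (x : ∀ k, Fin (n k)) (ε : ℝ) : Set (∀ k, Fin (n k)) :=
  {y | deltaK x y < ε}

/-- The equilibrium state: the product of the uniform probability measures, characterized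
by its values on cylinders. -/
def IsEquilibrium {n : ℕ → ℕ} (μ : Measure (∀ k, Fin (n k))) : Prop :=
  ∀ (k : ℕ) (s : ∀ j, Fin (n j)),
    μ {y | ∀ j < k, y j = s j} = ∏ j ∈ Finset.range k, ((n j : ℝ≥0∞))⁻¹

/-- Hausdorff functions: continuous nondecreasing, vanishing exactly at `0`. -/
def IsHausdorffFn (φ : ℝ → ℝ) : Prop :=
  ContinuousOn φ (Set.Ici 0) ∧ MonotoneOn φ (Set.Ici 0) ∧ φ 0 = 0 ∧ ∀ ε > 0, 0 < φ ε

/-- The upper `φ`-density of `μ` at `x`. -/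
noncomputable def upperDensK {n : ℕ → ℕ} (μ : Measure (∀ k, Fin (n k))) (φ : ℝ → ℝ)
    (x : ∀ k, Fin (n k)) : ℝ≥0∞ :=
  Filter.limsup (fun ε : ℝ => μ (BallK x ε) / ENNReal.ofReal (φ ε)) (𝓝[>] 0)

/-- The lower `φ`-density of `μ` at `x`. -/
noncomputable def lowerDensK {n : ℕ → ℕ} (μ : Measure (∀ k, Fin (n k))) (φ : ℝ → ℝ)
    (x : ∀ k, Fin (n k)) : ℝ≥0∞ :=
  Filter.liminf (fun ε : ℝ => μ (BallK x ε) / ENNReal.ofReal (φ ε)) (𝓝[>] 0)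

/-- The `φ`-Hausdorff measure on the compact product, defined via countable covers by
open balls of radii at most `ε`, letting `ε → 0`. -/
noncomputable def HK {n : ℕ → ℕ} (φ : ℝ → ℝ) (S : Set (∀ k, Fin (n k))) : ℝ≥0∞ :=
  ⨆ (ε : ℝ) (_ : 0 < ε),
    ⨅ (c : ℕ → (∀ k, Fin (n k)) × ℝ)
      (_ : (∀ i, 0 ≤ (c i).2 ∧ (c i).2 ≤ ε) ∧ S ⊆ ⋃ i, BallK (c i).1 (c i).2),
      ∑' i, ENNReal.ofReal (φ (c i).2)

/-- The `φ`-packing premeasure on the compact product, defined via countable packs by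
disjoint open balls centered in the set, of radii at most `ε`, letting `ε → 0`. -/
noncomputable def PK0 {n : ℕ → ℕ} (φ : ℝ → ℝ) (S : Set (∀ k, Fin (n k))) : ℝ≥0∞ :=
  ⨅ (ε : ℝ) (_ : 0 < ε),
    ⨆ (c : ℕ → (∀ k, Fin (n k)) × ℝ)
      (_ : (∀ i, (c i).1 ∈ S ∧ 0 ≤ (c i).2 ∧ (c i).2 ≤ ε) ∧
        Pairwise fun i j => Disjoint (BallK (c i).1 (c i).2) (BallK (c j).1 (c j).2)),
      ∑' i, ENNReal.ofReal (φ (c i).2)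

/-- The `φ`-packing measure on the compact product. -/
noncomputable def PK {n : ℕ → ℕ} (φ : ℝ → ℝ) (S : Set (∀ k, Fin (n k))) : ℝ≥0∞ :=
  ⨅ (F : ℕ → Set (∀ k, Fin (n k))) (_ : S ⊆ ⋃ m, F m), ∑' m, PK0 φ (F m)

/-!
For an equilibrium state of `K = ∏ₖ {1, …, nₖ}`, every ball of radius `r ∈ (2^-(k+1), 2^-k]`
is a cylinder of level `k`, of measure `1 / Nₖ` with `Nₖ = n₀ ⋯ nₖ₋₁`. Covering and packing by
such cylinders, together with the mass distribution principle, give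
`H^φ(K) = liminf Nₖ φ(2^-(k+1))` and `P^ψ(K) = limsup Nₖ ψ(2^-k)`, while the upper `φ`-density
and lower `ψ`-density of `μ` are everywhere the inverses of these two numbers.

It remains to choose the `nₖ` so that both are finite and positive. Take `Nₖ₊₁` to be the least
multiple of `Nₖ` keeping `Nₖ₊₁ φ(2^-(k+2)) ≥ 1`; since `φ → 0` this multiplier is `> 1`
infinitely often, and then `Nₖ₊₁ φ(2^-(k+2)) < 2`. Right after each such step also push
`N ψ` above `1`; because `ψ(2ε) ≤ C φ(ε)` this costs at most a bounded factor, so `N ψ` stays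
bounded.
-/

def dyadicShell (k : ℕ) : Set ℝ := Set.Ioc (2⁻¹ ^ (k + 1)) (2⁻¹ ^ k)

lemma dyadicShell_pos {k : ℕ} {r : ℝ} (hr : r ∈ dyadicShell k) : 0 < r :=
  (pow_pos (by norm_num) _).trans hr.1

lemma two_inv_pow_mem_dyadicShell (k : ℕ) : (2⁻¹ : ℝ) ^ k ∈ dyadicShell k :=
  ⟨pow_lt_pow_right_of_lt_one₀ (by norm_num) (by norm_num) k.lt_succ_self, le_rfl⟩

lemma exists_mem_dyadicShell {ε : ℝ} (hε : 0 < ε) {K : ℕ} (hK : ε ≤ 2⁻¹ ^ K) :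
    ∃ k, K ≤ k ∧ ε ∈ dyadicShell k := by
  obtain ⟨k, hk⟩ := exists_nat_pow_near_of_lt_one hε
    (hK.trans (pow_le_one₀ (by norm_num) (by norm_num))) (by norm_num : (0 : ℝ) < 2⁻¹)
    (by norm_num)
  refine ⟨k, ?_, hk⟩
  have := hk.1.trans_le hK
  rw [pow_lt_pow_iff_right_of_lt_one₀ (by norm_num) (by norm_num)] at this
  omega

lemma exists_two_inv_pow_le {ε : ℝ} (hε : 0 < ε) : ∃ K : ℕ, (2⁻¹ : ℝ) ^ K ≤ ε :=
  (exists_pow_lt_of_lt_one hε (by norm_num : (2⁻¹ : ℝ) < 1)).imp fun _ h => h.le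

lemma two_mul_two_inv_pow_succ (k : ℕ) : (2 : ℝ) * 2⁻¹ ^ (k + 1) = 2⁻¹ ^ k := by
  rw [pow_succ]
  ring

lemma tendsto_two_inv_pow_nhdsGT_zero : Tendsto (fun k : ℕ => (2⁻¹ : ℝ) ^ k) atTop (𝓝[>] 0) :=
  tendsto_nhdsWithin_iff.mpr ⟨tendsto_pow_atTop_nhds_zero_of_lt_one (by norm_num) (by norm_num),
    .of_forall fun k => (pow_pos (by norm_num) k : (0 : ℝ) < 2⁻¹ ^ k)⟩

lemma IsHausdorffFn.antitone_two_inv_pow {φ : ℝ → ℝ} (hφ : IsHausdorffFn φ) :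
    Antitone fun k : ℕ => φ (2⁻¹ ^ k) := fun k l hkl =>
  hφ.2.1 (Set.mem_Ici.mpr (by positivity : (0 : ℝ) ≤ 2⁻¹ ^ l))
    (Set.mem_Ici.mpr (by positivity : (0 : ℝ) ≤ 2⁻¹ ^ k))
    (pow_le_pow_of_le_one (by norm_num) (by norm_num) hkl)

lemma Ioc_zero_two_inv_pow_eq_iUnion (K : ℕ) :
    Set.Ioc (0 : ℝ) (2⁻¹ ^ K) = ⋃ k ≥ K, dyadicShell k := by
  ext ε
  simp only [Set.mem_iUnion, exists_prop]
  constructor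
  · exact fun hε => exists_mem_dyadicShell hε.1 hε.2
  · rintro ⟨k, hKk, hε⟩
    exact ⟨dyadicShell_pos hε,
      hε.2.trans (pow_le_pow_of_le_one (by norm_num) (by norm_num) hKk)⟩

lemma hasBasis_nhdsGT_zero_two_inv_pow :
    (𝓝[>] (0 : ℝ)).HasBasis (fun _ : ℕ => True) (fun K => Set.Ioc 0 (2⁻¹ ^ K)) :=
  (nhdsGT_basis_Ioc (0 : ℝ)).to_hasBasis
    (fun _ hδ => (exists_two_inv_pow_le hδ).imp fun _ hK => ⟨trivial, Set.Ioc_subset_Ioc_right hK⟩)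
    (fun K _ => ⟨2⁻¹ ^ K, by positivity, subset_rfl⟩)

lemma limsup_nhdsGT_zero_eq_limsup_iSup_dyadicShell {α : Type*} [CompleteLattice α]
    (f : ℝ → α) :
    limsup f (𝓝[>] 0) = limsup (fun k => ⨆ ε ∈ dyadicShell k, f ε) atTop := by
  rw [hasBasis_nhdsGT_zero_two_inv_pow.limsup_eq_iInf_iSup, limsup_eq_iInf_iSup_of_nat]
  simp only [iInf_true, Ioc_zero_two_inv_pow_eq_iUnion, iSup_iUnion]

lemma liminf_nhdsGT_zero_eq_liminf_iInf_dyadicShell {α : Type*} [CompleteLattice α]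
    (f : ℝ → α) :
    liminf f (𝓝[>] 0) = liminf (fun k => ⨅ ε ∈ dyadicShell k, f ε) atTop := by
  rw [hasBasis_nhdsGT_zero_two_inv_pow.liminf_eq_iSup_iInf, liminf_eq_iSup_iInf_of_nat]
  simp only [iSup_true, Ioc_zero_two_inv_pow_eq_iUnion, iInf_iUnion]

lemma MonotoneOn.iInf_Ioc_eq_of_continuousWithinAt {α : Type*} [CompleteLinearOrder α]
    [TopologicalSpace α] [OrderTopology α] {g : ℝ → α} {a b : ℝ} (hab : a < b)
    (hg : MonotoneOn g (Set.Icc a b)) (hga : ContinuousWithinAt g (Set.Ioi a) a) :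
    ⨅ x ∈ Set.Ioc a b, g x = g a := by
  refine le_antisymm (ge_of_tendsto hga ?_) (le_iInf₂ fun x hx =>
    hg ⟨le_rfl, hab.le⟩ (Set.Ioc_subset_Icc_self hx) hx.1.le)
  filter_upwards [Ioc_mem_nhdsGT hab] with x hx using iInf₂_le x hx

lemma MonotoneOn.iSup_Ioc_eq {α : Type*} [CompleteLattice α] {g : ℝ → α} {a b : ℝ}
    (hab : a < b) (hg : MonotoneOn g (Set.Ioc a b)) : ⨆ x ∈ Set.Ioc a b, g x = g b :=
  le_antisymm (iSup₂_le fun _ hx => hg hx ⟨hab, le_rfl⟩ hx.2)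
    (le_iSup₂ (f := fun x _ => g x) b ⟨hab, le_rfl⟩)

lemma liminf_ofReal_mem_Ioo {u : ℕ → ℝ} {a b : ℝ} (ha : 0 < a)
    (hlo : ∀ᶠ k in atTop, a ≤ u k) (hhi : ∃ᶠ k in atTop, u k ≤ b) :
    liminf (fun k => ENNReal.ofReal (u k)) atTop ∈ Set.Ioo 0 ⊤ :=
  ⟨(ENNReal.ofReal_pos.mpr ha).trans_le (le_liminf_of_le (by isBoundedDefault)
      (hlo.mono fun _ hk => ENNReal.ofReal_le_ofReal hk)),
    (liminf_le_of_frequently_le (hhi.mono fun _ hk => ENNReal.ofReal_le_ofReal hk)).trans_lt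
      ENNReal.ofReal_lt_top⟩

lemma limsup_ofReal_mem_Ioo {u : ℕ → ℝ} {a b : ℝ} (ha : 0 < a)
    (hlo : ∃ᶠ k in atTop, a ≤ u k) (hhi : ∀ᶠ k in atTop, u k ≤ b) :
    limsup (fun k => ENNReal.ofReal (u k)) atTop ∈ Set.Ioo 0 ⊤ :=
  ⟨(ENNReal.ofReal_pos.mpr ha).trans_le
      (le_limsup_of_frequently_le (hlo.mono fun _ hk => ENNReal.ofReal_le_ofReal hk)),
    (limsup_le_of_le (by isBoundedDefault)
      (hhi.mono fun _ hk => ENNReal.ofReal_le_ofReal hk)).trans_lt ENNReal.ofReal_lt_top⟩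

section Cylinders

variable {n : ℕ → ℕ}

def cylK (x : ∀ k, Fin (n k)) (k : ℕ) : Set (∀ k, Fin (n k)) := {y | ∀ j < k, y j = x j}

lemma cylK_eq_pi (x : ∀ k, Fin (n k)) (k : ℕ) :
    cylK x k = (Finset.range k : Set ℕ).pi fun j => {x j} := by
  ext y
  simp [cylK]

lemma measurableSet_cylK (x : ∀ k, Fin (n k)) (k : ℕ) : MeasurableSet (cylK x k) := by
  rw [cylK_eq_pi]
  exact .pi (Set.to_countable _) fun _ _ => measurableSet_singleton _

lemma cylK_zero (x : ∀ k, Fin (n k)) : cylK x 0 = Set.univ := by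
  simp [cylK]

lemma deltaK_of_ne {x y : ∀ k, Fin (n k)} (hxy : x ≠ y) :
    deltaK x y = 2⁻¹ ^ (sInf {k | x k ≠ y k} + 1) := by
  rw [deltaK, if_neg hxy, chiK, zpow_neg, zpow_natCast, inv_pow]

lemma deltaK_le_two_inv (x y : ∀ k, Fin (n k)) : deltaK x y ≤ 2⁻¹ := by
  by_cases hxy : x = y
  · simp [deltaK, hxy]
  · rw [deltaK_of_ne hxy, pow_succ]
    exact mul_le_of_le_one_left (by norm_num) (pow_le_one₀ (by norm_num) (by norm_num))

lemma ballK_of_nonpos (x : ∀ k, Fin (n k)) {r : ℝ} (hr : r ≤ 0) : BallK x r = ∅ := by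
  refine Set.eq_empty_of_forall_notMem fun y hy => hr.not_gt (lt_of_le_of_lt ?_ hy)
  unfold deltaK
  split_ifs
  exacts [le_rfl, by positivity]

lemma ballK_eq_cylK (x : ∀ k, Fin (n k)) {k : ℕ} {r : ℝ} (hr : r ∈ dyadicShell k) :
    BallK x r = cylK x k := by
  ext y
  by_cases hxy : x = y
  · subst hxy
    simpa [BallK, cylK, deltaK] using dyadicShell_pos hr
  have hD : {j | x j ≠ y j}.Nonempty := by
    by_contra hD
    exact hxy (funext fun j => by_contra fun hj => hD ⟨j, hj⟩)
  show deltaK x y < r ↔ ∀ j < k, y j = x j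
  rw [deltaK_of_ne hxy]
  -- both sides say that `x` and `y` first differ at an index `≥ k`
  have key : k ≤ sInf {j | x j ≠ y j} ↔ (2⁻¹ : ℝ) ^ (sInf {j | x j ≠ y j} + 1) < r := by
    constructor
    · exact fun h => (pow_le_pow_of_le_one (by norm_num) (by norm_num) (by omega)).trans_lt hr.1
    · intro h
      by_contra! h'
      exact (hr.2.trans (pow_le_pow_of_le_one (by norm_num) (by norm_num) (by omega))).not_gt h
  rw [← key]
  constructor
  · exact fun h j hj => (not_not.mp (Nat.notMem_of_lt_sInf (hj.trans_le h))).symm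
  · intro h
    by_contra! h'
    exact Nat.sInf_mem hD (h _ h').symm

lemma exists_ballK_eq_cylK (x : ∀ k, Fin (n k)) {r : ℝ} (hr : 0 < r) :
    ∃ k, BallK x r = cylK x k := by
  rcases le_or_gt r 1 with hr1 | hr1
  · obtain ⟨k, -, hk⟩ := exists_mem_dyadicShell hr (K := 0) (by simpa using hr1)
    exact ⟨k, ballK_eq_cylK x hk⟩
  · refine ⟨0, ?_⟩
    rw [cylK_zero, Set.eq_univ_iff_forall]
    exact fun y => (deltaK_le_two_inv x y).trans_lt (by linarith)

lemma measurableSet_ballK (x : ∀ k, Fin (n k)) (r : ℝ) : MeasurableSet (BallK x r) := by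
  rcases le_or_gt r 0 with hr | hr
  · rw [ballK_of_nonpos x hr]
    exact .empty
  · obtain ⟨k, hk⟩ := exists_ballK_eq_cylK x hr
    exact hk ▸ measurableSet_cylK x k

lemma disjoint_cylK {x y : ∀ k, Fin (n k)} {k : ℕ} (h : ∃ j < k, x j ≠ y j) :
    Disjoint (cylK x k) (cylK y k) := by
  obtain ⟨j, hj, hxy⟩ := h
  exact Set.disjoint_left.mpr fun z hx hy => hxy ((hx j hj).symm.trans (hy j hj))

end Cylinders

section Equilibrium

variable {n : ℕ → ℕ}

def cylCount (n : ℕ → ℕ) (k : ℕ) : ℕ := ∏ j ∈ Finset.range k, n j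

lemma cylCount_ne_zero [∀ k, NeZero (n k)] (k : ℕ) : cylCount n k ≠ 0 :=
  Finset.prod_ne_zero_iff.mpr fun j _ => NeZero.ne (n j)

lemma exists_finset_cylK_representatives (S : Set (∀ k, Fin (n k))) (k : ℕ) :
    ∃ s : Finset (∀ k, Fin (n k)), ↑s ⊆ S ∧ S ⊆ ⋃ x ∈ s, cylK x k ∧
      (s : Set (∀ k, Fin (n k))).PairwiseDisjoint (cylK · k) ∧ s.card ≤ cylCount n k := by
  let trunc : (∀ k, Fin (n k)) → ∀ j : Fin k, Fin (n j) := fun x j => x j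
  obtain ⟨s, hsS, hbij⟩ := Set.exists_subset_bijOn S trunc
  have hs : s.Finite := Set.Finite.of_finite_image (Set.toFinite _) hbij.injOn
  refine ⟨hs.toFinset, by simpa using hsS, fun y hy => ?_, fun x hx x' hx' hxx' => ?_, ?_⟩
  · obtain ⟨x, hx, hxy⟩ := hbij.surjOn ⟨y, hy, rfl⟩
    simp only [Set.mem_iUnion, Set.Finite.mem_toFinset]
    exact ⟨x, hx, fun j hj => (congrFun hxy ⟨j, hj⟩).symm⟩
  · simp only [Set.Finite.coe_toFinset] at hx hx'
    obtain ⟨j, hj⟩ := Function.ne_iff.mp fun h => hxx' (hbij.injOn hx hx' h)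
    exact disjoint_cylK ⟨j, j.2, hj⟩
  · calc hs.toFinset.card ≤ (Finset.univ : Finset (∀ j : Fin k, Fin (n j))).card :=
          Finset.card_le_card_of_injOn trunc (fun _ _ => Finset.mem_univ _)
            (by simpa using hbij.injOn)
      _ = cylCount n k := by
          simp [cylCount, Fintype.card_pi, Fin.prod_univ_eq_prod_range (fun j => n j)]

lemma IsEquilibrium.measure_cylK {μ : Measure (∀ k, Fin (n k))} (hμ : IsEquilibrium μ)
    (x : ∀ k, Fin (n k)) (k : ℕ) : μ (cylK x k) = (cylCount n k : ℝ≥0∞)⁻¹ := by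
  rw [cylK, hμ, cylCount, Nat.cast_prod, ENNReal.prod_inv_distrib]
  exact fun _ _ _ _ _ => Or.inr (ENNReal.natCast_ne_top _)

lemma IsEquilibrium.isProbabilityMeasure [∀ k, NeZero (n k)] {μ : Measure (∀ k, Fin (n k))}
    (hμ : IsEquilibrium μ) : IsProbabilityMeasure μ :=
  ⟨by simpa [cylK_zero, cylCount] using hμ.measure_cylK 0 0⟩

noncomputable def equilibriumMeasure (n : ℕ → ℕ) [∀ k, NeZero (n k)] :
    Measure (∀ k, Fin (n k)) :=
  Measure.infinitePi fun k => (PMF.uniformOfFintype (Fin (n k))).toMeasure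

lemma isEquilibrium_equilibriumMeasure (n : ℕ → ℕ) [∀ k, NeZero (n k)] :
    IsEquilibrium (equilibriumMeasure n) := by
  intro k s
  rw [← cylK, cylK_eq_pi, equilibriumMeasure,
    Measure.infinitePi_pi _ fun _ _ => measurableSet_singleton _]
  simp [PMF.uniformOfFintype_apply]

end Equilibrium

section Densities

variable {n : ℕ → ℕ} {μ : Measure (∀ k, Fin (n k))} {φ : ℝ → ℝ}

/-- The `φ`-cost of the `cylCount n k` cylinders of level `k` seen as balls of radius `r`. -/
noncomputable def levelGauge (n : ℕ → ℕ) (φ : ℝ → ℝ) (k : ℕ) (r : ℝ) : ℝ≥0∞ :=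
  cylCount n k * ENNReal.ofReal (φ r)

noncomputable def hausdorffSeq (n : ℕ → ℕ) (φ : ℝ → ℝ) (k : ℕ) : ℝ≥0∞ :=
  levelGauge n φ k (2⁻¹ ^ (k + 1))

noncomputable def packingSeq (n : ℕ → ℕ) (φ : ℝ → ℝ) (k : ℕ) : ℝ≥0∞ :=
  levelGauge n φ k (2⁻¹ ^ k)

lemma levelGauge_eq_ofReal (n : ℕ → ℕ) (φ : ℝ → ℝ) (k : ℕ) (r : ℝ) :
    levelGauge n φ k r = ENNReal.ofReal (cylCount n k * φ r) := by
  rw [levelGauge, ENNReal.ofReal_mul (Nat.cast_nonneg _), ENNReal.ofReal_natCast]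

lemma IsHausdorffFn.monotoneOn_levelGauge (hφ : IsHausdorffFn φ) (k : ℕ) :
    MonotoneOn (levelGauge n φ k) (Set.Ici 0) := fun _ ha _ hb hab => by
  unfold levelGauge
  gcongr
  exact hφ.2.1 ha hb hab

lemma IsHausdorffFn.iInf_levelGauge (hφ : IsHausdorffFn φ) (k : ℕ) :
    ⨅ r ∈ dyadicShell k, levelGauge n φ k r = hausdorffSeq n φ k := by
  have h0 : (0 : ℝ) ≤ 2⁻¹ ^ (k + 1) := by positivity
  refine MonotoneOn.iInf_Ioc_eq_of_continuousWithinAt (two_inv_pow_mem_dyadicShell k).1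
    ((hφ.monotoneOn_levelGauge k).mono fun r hr => h0.trans hr.1) ?_
  have hφa : ContinuousWithinAt φ (Set.Ioi (2⁻¹ ^ (k + 1))) (2⁻¹ ^ (k + 1)) :=
    (hφ.1.continuousWithinAt h0).mono fun r hr => h0.trans (le_of_lt hr)
  exact (ENNReal.continuous_const_mul (ENNReal.natCast_ne_top _)).continuousAt
    |>.comp_continuousWithinAt (ENNReal.continuous_ofReal.continuousAt.comp_continuousWithinAt hφa)

lemma IsHausdorffFn.iSup_levelGauge (hφ : IsHausdorffFn φ) (k : ℕ) :
    ⨆ r ∈ dyadicShell k, levelGauge n φ k r = packingSeq n φ k :=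
  MonotoneOn.iSup_Ioc_eq (two_inv_pow_mem_dyadicShell k).1
    ((hφ.monotoneOn_levelGauge k).mono fun _ hr => (dyadicShell_pos hr).le)

lemma IsEquilibrium.measure_ballK_div (hμ : IsEquilibrium μ) (x : ∀ k, Fin (n k)) {k : ℕ}
    {r : ℝ} (hr : r ∈ dyadicShell k) :
    μ (BallK x r) / ENNReal.ofReal (φ r) = (levelGauge n φ k r)⁻¹ := by
  rw [ballK_eq_cylK x hr, hμ.measure_cylK, levelGauge, div_eq_mul_inv,
    ENNReal.mul_inv (.inr ENNReal.ofReal_ne_top) (.inl (ENNReal.natCast_ne_top _))]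

lemma IsEquilibrium.upperDensK_eq (hμ : IsEquilibrium μ) (hφ : IsHausdorffFn φ)
    (x : ∀ k, Fin (n k)) : upperDensK μ φ x = (liminf (hausdorffSeq n φ) atTop)⁻¹ := by
  rw [upperDensK, limsup_nhdsGT_zero_eq_limsup_iSup_dyadicShell, ENNReal.inv_liminf]
  congr 1
  ext k
  rw [← hφ.iInf_levelGauge k]
  simp only [ENNReal.inv_iInf]
  exact iSup_congr fun r => iSup_congr fun hr => hμ.measure_ballK_div x hr

lemma IsEquilibrium.lowerDensK_eq (hμ : IsEquilibrium μ) (hφ : IsHausdorffFn φ)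
    (x : ∀ k, Fin (n k)) : lowerDensK μ φ x = (limsup (packingSeq n φ) atTop)⁻¹ := by
  rw [lowerDensK, liminf_nhdsGT_zero_eq_liminf_iInf_dyadicShell, ENNReal.inv_limsup]
  congr 1
  ext k
  rw [← hφ.iSup_levelGauge k]
  simp only [ENNReal.inv_iSup]
  exact iInf_congr fun r => iInf_congr fun hr => hμ.measure_ballK_div x hr

lemma IsEquilibrium.levelGauge_mul_measure_cylK [∀ k, NeZero (n k)] (hμ : IsEquilibrium μ)
    (x : ∀ k, Fin (n k)) (k : ℕ) (r : ℝ) :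
    levelGauge n φ k r * μ (cylK x k) = ENNReal.ofReal (φ r) := by
  rw [levelGauge, hμ.measure_cylK, mul_comm (cylCount n k : ℝ≥0∞),
    ENNReal.mul_inv_cancel_right (by exact_mod_cast cylCount_ne_zero k)
      (ENNReal.natCast_ne_top _)]

end Densities

section Measures

variable {n : ℕ → ℕ} {φ : ℝ → ℝ}

noncomputable def HKε (φ : ℝ → ℝ) (ε : ℝ) (S : Set (∀ k, Fin (n k))) : ℝ≥0∞ :=
  ⨅ (c : ℕ → (∀ k, Fin (n k)) × ℝ)
    (_ : (∀ i, 0 ≤ (c i).2 ∧ (c i).2 ≤ ε) ∧ S ⊆ ⋃ i, BallK (c i).1 (c i).2),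
    ∑' i, ENNReal.ofReal (φ (c i).2)

noncomputable def PK0ε (φ : ℝ → ℝ) (ε : ℝ) (S : Set (∀ k, Fin (n k))) : ℝ≥0∞ :=
  ⨆ (c : ℕ → (∀ k, Fin (n k)) × ℝ)
    (_ : (∀ i, (c i).1 ∈ S ∧ 0 ≤ (c i).2 ∧ (c i).2 ≤ ε) ∧
      Pairwise fun i j => Disjoint (BallK (c i).1 (c i).2) (BallK (c j).1 (c j).2)),
    ∑' i, ENNReal.ofReal (φ (c i).2)

lemma HK_eq_iSup_HKε (φ : ℝ → ℝ) (S : Set (∀ k, Fin (n k))) :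
    HK φ S = ⨆ (ε : ℝ) (_ : 0 < ε), HKε φ ε S := rfl

lemma PK0_eq_iInf_PK0ε (φ : ℝ → ℝ) (S : Set (∀ k, Fin (n k))) :
    PK0 φ S = ⨅ (ε : ℝ) (_ : 0 < ε), PK0ε φ ε S := rfl

/-- The balls of radius `r` centred at the points of `s`, padded by empty balls at `x₀`. -/
noncomputable def finsetBalls (s : Finset (∀ k, Fin (n k))) (r : ℝ) (x₀ : ∀ k, Fin (n k)) :
    ℕ → (∀ k, Fin (n k)) × ℝ :=
  fun i => if h : i < s.card then (↑(s.equivFin.symm ⟨i, h⟩), r) else (x₀, 0)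

section FinsetBalls

variable {s : Finset (∀ k, Fin (n k))} {r : ℝ} {x₀ : ∀ k, Fin (n k)}

lemma finsetBalls_of_lt {i : ℕ} (h : i < s.card) :
    finsetBalls s r x₀ i = (↑(s.equivFin.symm ⟨i, h⟩), r) := dif_pos h

lemma finsetBalls_of_le {i : ℕ} (h : s.card ≤ i) : finsetBalls s r x₀ i = (x₀, 0) :=
  dif_neg h.not_gt

lemma finsetBalls_snd_mem (hr : 0 ≤ r) {ε : ℝ} (hrε : r ≤ ε) (i : ℕ) :
    0 ≤ (finsetBalls s r x₀ i).2 ∧ (finsetBalls s r x₀ i).2 ≤ ε := by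
  rcases lt_or_ge i s.card with h | h
  · simpa [finsetBalls_of_lt h] using ⟨hr, hrε⟩
  · simpa [finsetBalls_of_le h] using hr.trans hrε

lemma finsetBalls_fst_mem {S : Set (∀ k, Fin (n k))} (hsS : ↑s ⊆ S) (hx₀ : x₀ ∈ S) (i : ℕ) :
    (finsetBalls s r x₀ i).1 ∈ S := by
  rcases lt_or_ge i s.card with h | h
  · simpa [finsetBalls_of_lt h] using hsS (s.equivFin.symm ⟨i, h⟩).2
  · simpa [finsetBalls_of_le h] using hx₀

lemma iUnion_ballK_finsetBalls :
    ⋃ i, BallK (finsetBalls s r x₀ i).1 (finsetBalls s r x₀ i).2 = ⋃ x ∈ s, BallK x r := by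
  refine subset_antisymm (Set.iUnion_subset fun i => ?_) (Set.iUnion₂_subset fun x hx => ?_)
  · rcases lt_or_ge i s.card with h | h
    · rw [finsetBalls_of_lt h]
      exact Set.subset_biUnion_of_mem (u := fun x => BallK x r) (s.equivFin.symm ⟨i, h⟩).2
    · simp [finsetBalls_of_le h, ballK_of_nonpos x₀ le_rfl]
  · let i := s.equivFin ⟨x, hx⟩
    refine Set.subset_iUnion_of_subset i.1 ?_
    rw [finsetBalls_of_lt i.2]
    simp [i]

lemma pairwise_disjoint_finsetBalls
    (hs : (s : Set (∀ k, Fin (n k))).PairwiseDisjoint (BallK · r)) :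
    Pairwise fun i j => Disjoint (BallK (finsetBalls s r x₀ i).1 (finsetBalls s r x₀ i).2)
      (BallK (finsetBalls s r x₀ j).1 (finsetBalls s r x₀ j).2) := by
  intro i j hij
  rcases le_or_gt s.card i with hi | hi
  · simp [finsetBalls_of_le hi, ballK_of_nonpos x₀ le_rfl]
  rcases le_or_gt s.card j with hj | hj
  · simp [finsetBalls_of_le hj, ballK_of_nonpos x₀ le_rfl]
  rw [finsetBalls_of_lt hi, finsetBalls_of_lt hj]
  refine hs (s.equivFin.symm _).2 (s.equivFin.symm _).2 fun h => hij ?_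
  simpa using s.equivFin.symm.injective (Subtype.ext h)

lemma tsum_ofReal_finsetBalls (hφ0 : φ 0 = 0) :
    ∑' i, ENNReal.ofReal (φ (finsetBalls s r x₀ i).2) = s.card * ENNReal.ofReal (φ r) := by
  rw [tsum_eq_sum (s := Finset.range s.card) fun i hi => by
    simp [finsetBalls_of_le (not_lt.mp (Finset.mem_range.not.mp hi)), hφ0]]
  rw [Finset.sum_congr rfl fun i hi => show ENNReal.ofReal (φ (finsetBalls s r x₀ i).2) =
      ENNReal.ofReal (φ r) by rw [finsetBalls_of_lt (Finset.mem_range.mp hi)],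
    Finset.sum_const, Finset.card_range, nsmul_eq_mul]

end FinsetBalls

lemma HKε_le_card_mul [Nonempty (∀ k, Fin (n k))] (hφ0 : φ 0 = 0)
    {S : Set (∀ k, Fin (n k))} {s : Finset (∀ k, Fin (n k))} {r ε : ℝ} (hr : 0 ≤ r)
    (hrε : r ≤ ε) (hS : S ⊆ ⋃ x ∈ s, BallK x r) :
    HKε φ ε S ≤ s.card * ENNReal.ofReal (φ r) := by
  let x₀ : ∀ k, Fin (n k) := Classical.arbitrary _
  rw [← tsum_ofReal_finsetBalls (x₀ := x₀) hφ0]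
  exact iInf₂_le_of_le (finsetBalls s r x₀)
    ⟨finsetBalls_snd_mem hr hrε, iUnion_ballK_finsetBalls ▸ hS⟩ le_rfl

lemma card_mul_le_PK0ε (hφ0 : φ 0 = 0) {S : Set (∀ k, Fin (n k))}
    {s : Finset (∀ k, Fin (n k))} {r ε : ℝ} (hsS : ↑s ⊆ S) (hr : 0 ≤ r) (hrε : r ≤ ε)
    (hs : (s : Set (∀ k, Fin (n k))).PairwiseDisjoint (BallK · r)) :
    s.card * ENNReal.ofReal (φ r) ≤ PK0ε φ ε S := by
  obtain rfl | ⟨x₀, hx₀⟩ := s.eq_empty_or_nonempty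
  · simp
  rw [← tsum_ofReal_finsetBalls (x₀ := x₀) hφ0]
  exact le_iSup₂_of_le (finsetBalls s r x₀)
    ⟨fun i => ⟨finsetBalls_fst_mem hsS (hsS hx₀) i, finsetBalls_snd_mem hr hrε i⟩,
      pairwise_disjoint_finsetBalls hs⟩ le_rfl

end Measures

section MassDistribution

variable {n : ℕ → ℕ} {μ : Measure (∀ k, Fin (n k))} {φ : ℝ → ℝ}

lemma mul_measure_le_HKε {c : ℝ≥0∞} {ε : ℝ}
    (h : ∀ x r, 0 < r → r ≤ ε → c * μ (BallK x r) ≤ ENNReal.ofReal (φ r))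
    (S : Set (∀ k, Fin (n k))) : c * μ S ≤ HKε φ ε S := by
  refine le_iInf₂ fun b ⟨hb, hS⟩ => ?_
  calc c * μ S ≤ c * ∑' i, μ (BallK (b i).1 (b i).2) :=
        mul_le_mul_right ((measure_mono hS).trans (measure_iUnion_le _)) c
    _ = ∑' i, c * μ (BallK (b i).1 (b i).2) := ENNReal.tsum_mul_left.symm
    _ ≤ ∑' i, ENNReal.ofReal (φ (b i).2) := ENNReal.tsum_le_tsum fun i => by
        rcases (hb i).1.eq_or_lt with hr | hr
        · simp [← hr, ballK_of_nonpos _ le_rfl]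
        · exact h _ _ hr (hb i).2

lemma PK0ε_le_mul_measure_univ (hφ0 : φ 0 = 0) {c : ℝ≥0∞} {ε : ℝ}
    (h : ∀ x r, 0 < r → r ≤ ε → ENNReal.ofReal (φ r) ≤ c * μ (BallK x r))
    (S : Set (∀ k, Fin (n k))) : PK0ε φ ε S ≤ c * μ Set.univ := by
  refine iSup₂_le fun b ⟨hb, hdisj⟩ => ?_
  calc ∑' i, ENNReal.ofReal (φ (b i).2) ≤ ∑' i, c * μ (BallK (b i).1 (b i).2) :=
        ENNReal.tsum_le_tsum fun i => by
          rcases (hb i).2.1.eq_or_lt with hr | hr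
          · simp [← hr, hφ0]
          · exact h _ _ hr (hb i).2.2
    _ = c * μ (⋃ i, BallK (b i).1 (b i).2) := by
        rw [ENNReal.tsum_mul_left, measure_iUnion hdisj fun i => measurableSet_ballK _ _]
    _ ≤ c * μ Set.univ := mul_le_mul_right (measure_mono (Set.subset_univ _)) c

lemma HK_univ_le_liminf [Nonempty (∀ k, Fin (n k))] (hφ : IsHausdorffFn φ) :
    HK φ (Set.univ : Set (∀ k, Fin (n k))) ≤ liminf (hausdorffSeq n φ) atTop := by
  refine iSup₂_le fun ε hε => ?_
  obtain ⟨K, hK⟩ := exists_two_inv_pow_le hε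
  rw [liminf_eq_iSup_iInf_of_nat]
  refine le_iSup_of_le K (le_iInf₂ fun k hk => ?_)
  rw [← hφ.iInf_levelGauge k]
  refine le_iInf₂ fun r hr => ?_
  obtain ⟨s, -, hcov, -, hcard⟩ := exists_finset_cylK_representatives Set.univ k
  calc HKε φ ε Set.univ ≤ s.card * ENNReal.ofReal (φ r) := by
        refine HKε_le_card_mul hφ.2.2.1 (dyadicShell_pos hr).le
          (hr.2.trans ((pow_le_pow_of_le_one (by norm_num) (by norm_num) hk).trans hK)) ?_
        simpa only [ballK_eq_cylK _ hr] using hcov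
    _ ≤ levelGauge n φ k r := by
        unfold levelGauge
        gcongr

lemma IsEquilibrium.liminf_le_HK_univ [∀ k, NeZero (n k)] (hμ : IsEquilibrium μ)
    (hφ : IsHausdorffFn φ) :
    liminf (hausdorffSeq n φ) atTop ≤ HK φ (Set.univ : Set (∀ k, Fin (n k))) := by
  have := hμ.isProbabilityMeasure
  rw [liminf_eq_iSup_iInf_of_nat, HK_eq_iSup_HKε]
  refine iSup_le fun K => le_iSup₂_of_le (2⁻¹ ^ K : ℝ) (by positivity) ?_
  calc ⨅ k ≥ K, hausdorffSeq n φ k = (⨅ k ≥ K, hausdorffSeq n φ k) * μ Set.univ := by simp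
    _ ≤ HKε φ (2⁻¹ ^ K) Set.univ := mul_measure_le_HKε (fun x r hr hrK => ?_) Set.univ
  obtain ⟨k, hk, hrk⟩ := exists_mem_dyadicShell hr hrK
  calc (⨅ k ≥ K, hausdorffSeq n φ k) * μ (BallK x r)
      ≤ hausdorffSeq n φ k * μ (cylK x k) := by
        rw [ballK_eq_cylK x hrk]
        gcongr
        exact iInf₂_le k hk
    _ = ENNReal.ofReal (φ (2⁻¹ ^ (k + 1))) := hμ.levelGauge_mul_measure_cylK x k _
    _ ≤ ENNReal.ofReal (φ r) :=
        ENNReal.ofReal_le_ofReal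
          (hφ.2.1 (Set.mem_Ici.mpr (by positivity)) (dyadicShell_pos hrk).le hrk.1.le)

lemma IsEquilibrium.HK_univ_eq [∀ k, NeZero (n k)] (hμ : IsEquilibrium μ)
    (hφ : IsHausdorffFn φ) :
    HK φ (Set.univ : Set (∀ k, Fin (n k))) = liminf (hausdorffSeq n φ) atTop :=
  (HK_univ_le_liminf hφ).antisymm (hμ.liminf_le_HK_univ hφ)

lemma PK0_empty : PK0 φ (∅ : Set (∀ k, Fin (n k))) = 0 :=
  le_antisymm (iInf₂_le_of_le 1 one_pos (iSup₂_le fun _ h => absurd (h.1 0).1 id)) bot_le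

lemma PK_le_PK0 (S : Set (∀ k, Fin (n k))) : PK φ S ≤ PK0 φ S := by
  refine iInf₂_le_of_le (fun i => if i = 0 then S else ∅) (Set.subset_iUnion_of_subset 0 ?_) ?_
  · simp
  · rw [tsum_eq_single 0 fun i hi => by simp [hi, PK0_empty]]
    simp

lemma IsEquilibrium.PK0_univ_le_limsup [∀ k, NeZero (n k)] (hμ : IsEquilibrium μ)
    (hφ : IsHausdorffFn φ) :
    PK0 φ (Set.univ : Set (∀ k, Fin (n k))) ≤ limsup (packingSeq n φ) atTop := by
  have := hμ.isProbabilityMeasure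
  rw [limsup_eq_iInf_iSup_of_nat, PK0_eq_iInf_PK0ε]
  refine le_iInf fun K => iInf₂_le_of_le (2⁻¹ ^ K : ℝ) (by positivity) ?_
  calc PK0ε φ (2⁻¹ ^ K) Set.univ ≤ (⨆ k ≥ K, packingSeq n φ k) * μ Set.univ :=
        PK0ε_le_mul_measure_univ hφ.2.2.1 (fun x r hr hrK => ?_) Set.univ
    _ = ⨆ k ≥ K, packingSeq n φ k := by simp
  obtain ⟨k, hk, hrk⟩ := exists_mem_dyadicShell hr hrK
  calc ENNReal.ofReal (φ r) ≤ ENNReal.ofReal (φ (2⁻¹ ^ k)) :=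
        ENNReal.ofReal_le_ofReal
          (hφ.2.1 (dyadicShell_pos hrk).le (Set.mem_Ici.mpr (by positivity)) hrk.2)
    _ = packingSeq n φ k * μ (cylK x k) := (hμ.levelGauge_mul_measure_cylK x k _).symm
    _ ≤ (⨆ k ≥ K, packingSeq n φ k) * μ (BallK x r) := by
        rw [ballK_eq_cylK x hrk]
        gcongr
        exact le_iSup₂ (f := fun k _ => packingSeq n φ k) k hk

lemma IsEquilibrium.limsup_mul_le_PK0 [∀ k, NeZero (n k)] (hμ : IsEquilibrium μ)
    (hφ : IsHausdorffFn φ) (S : Set (∀ k, Fin (n k))) :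
    limsup (packingSeq n φ) atTop * μ S ≤ PK0 φ S := by
  refine le_iInf₂ fun ε hε => ?_
  obtain ⟨K, hK⟩ := exists_two_inv_pow_le hε
  calc limsup (packingSeq n φ) atTop * μ S ≤ (⨆ k ≥ K, packingSeq n φ k) * μ S := by
        rw [limsup_eq_iInf_iSup_of_nat]
        gcongr
        exact iInf_le _ K
    _ = ⨆ k ≥ K, packingSeq n φ k * μ S := by simp only [ENNReal.iSup_mul]
    _ ≤ PK0ε φ ε S := iSup₂_le fun k hk => ?_
  obtain ⟨s, hsS, hcov, hdisj, -⟩ := exists_finset_cylK_representatives S k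
  have hballs : (fun x : ∀ k, Fin (n k) => BallK x (2⁻¹ ^ k)) = (cylK · k) :=
    funext fun x => ballK_eq_cylK x (two_inv_pow_mem_dyadicShell k)
  calc packingSeq n φ k * μ S ≤ packingSeq n φ k * ∑ x ∈ s, μ (cylK x k) := by
        gcongr
        exact (measure_mono hcov).trans (measure_biUnion_finset_le _ _)
    _ = s.card * ENNReal.ofReal (φ (2⁻¹ ^ k)) := by
        rw [packingSeq, Finset.mul_sum,
          Finset.sum_congr rfl fun x _ => hμ.levelGauge_mul_measure_cylK x k _,
          Finset.sum_const, nsmul_eq_mul]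
    _ ≤ PK0ε φ ε S :=
        card_mul_le_PK0ε hφ.2.2.1 hsS (by positivity)
          ((pow_le_pow_of_le_one (by norm_num) (by norm_num) hk).trans hK) (hballs ▸ hdisj)

lemma IsEquilibrium.limsup_mul_le_PK [∀ k, NeZero (n k)] (hμ : IsEquilibrium μ)
    (hφ : IsHausdorffFn φ) (S : Set (∀ k, Fin (n k))) :
    limsup (packingSeq n φ) atTop * μ S ≤ PK φ S := by
  refine le_iInf₂ fun F hF => ?_
  calc limsup (packingSeq n φ) atTop * μ S
      ≤ limsup (packingSeq n φ) atTop * ∑' m, μ (F m) := by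
        gcongr
        exact (measure_mono hF).trans (measure_iUnion_le _)
    _ = ∑' m, limsup (packingSeq n φ) atTop * μ (F m) := ENNReal.tsum_mul_left.symm
    _ ≤ ∑' m, PK0 φ (F m) := ENNReal.tsum_le_tsum fun m => hμ.limsup_mul_le_PK0 hφ (F m)

lemma IsEquilibrium.PK_univ_eq [∀ k, NeZero (n k)] (hμ : IsEquilibrium μ)
    (hφ : IsHausdorffFn φ) :
    PK φ (Set.univ : Set (∀ k, Fin (n k))) = limsup (packingSeq n φ) atTop := by
  have := hμ.isProbabilityMeasure
  refine ((PK_le_PK0 _).trans (hμ.PK0_univ_le_limsup hφ)).antisymm ?_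
  simpa using hμ.limsup_mul_le_PK hφ Set.univ

end MassDistribution

section Branching

lemma one_le_mul_of_ceil_inv_le {x : ℝ} {m : ℕ} (hx : 0 < x) (hm : ⌈x⁻¹⌉₊ ≤ m) :
    1 ≤ (m : ℝ) * x :=
  calc 1 = x⁻¹ * x := (inv_mul_cancel₀ hx.ne').symm
    _ ≤ m * x := by gcongr; exact (Nat.le_ceil _).trans (by exact_mod_cast hm)

lemma ceil_inv_eq_one {x : ℝ} (hx : 1 ≤ x) : ⌈x⁻¹⌉₊ = 1 := by
  rw [Nat.ceil_eq_iff one_ne_zero]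
  exact ⟨by simpa using zero_lt_one.trans_le hx, by simpa using inv_le_one_of_one_le₀ hx⟩

lemma ceil_inv_mul_le_max {x : ℝ} (hx : 0 < x) : (⌈x⁻¹⌉₊ : ℝ) * x ≤ max 2 x := by
  rcases lt_or_ge x 1 with hx1 | hx1
  · calc (⌈x⁻¹⌉₊ : ℝ) * x ≤ (x⁻¹ + 1) * x := by
          gcongr; exact (Nat.ceil_lt_add_one (inv_nonneg.2 hx.le)).le
      _ = 1 + x := by field_simp
      _ ≤ max 2 x := le_max_of_le_left (by linarith)
  · simp [ceil_inv_eq_one hx1]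

variable (q t : ℕ → ℝ)

noncomputable def branchFactor (k : ℕ) (s : ℕ × Bool) : ℕ :=
  if s.2 then max ⌈(s.1 * q (k + 1))⁻¹⌉₊ ⌈(s.1 * t (k + 1))⁻¹⌉₊ else ⌈(s.1 * q (k + 1))⁻¹⌉₊

/-- The pair `(N_k, b_k)`: `b_k` records that the step into level `k` genuinely multiplied
(`N_{k-1} q_k < 1`), and the step out of such a level also forces `N t ≥ 1`. -/
noncomputable def branchState : ℕ → ℕ × Bool
  | 0 => (1, false)
  | k + 1 => ((branchState k).1 * branchFactor q t k (branchState k),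
      !(branchState k).2 && decide ((branchState k).1 * q (k + 1) < 1))

variable {q t}

lemma branchState_succ_fst (k : ℕ) :
    ((branchState q t (k + 1)).1 : ℝ) =
      (branchState q t k).1 * branchFactor q t k (branchState q t k) := by
  simp [branchState]

lemma ceil_inv_le_branchFactor (k : ℕ) (s : ℕ × Bool) :
    ⌈(s.1 * q (k + 1))⁻¹⌉₊ ≤ branchFactor q t k s := by
  unfold branchFactor
  split_ifs
  exacts [le_max_left _ _, le_rfl]

lemma cylCount_branchFactor (k : ℕ) :
    cylCount (fun j => branchFactor q t j (branchState q t j)) k = (branchState q t k).1 := by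
  induction k with
  | zero => rfl
  | succ k ih => rw [cylCount, Finset.prod_range_succ, ← cylCount, ih]; rfl

variable (hq : ∀ k, 0 < q k) (ht : ∀ k, 0 < t k)
include hq

lemma branchFactor_pos (k : ℕ) {s : ℕ × Bool} (hs : 0 < s.1) : 0 < branchFactor q t k s :=
  lt_of_lt_of_le (Nat.ceil_pos.mpr (inv_pos.mpr (mul_pos (Nat.cast_pos.mpr hs) (hq _))))
    (ceil_inv_le_branchFactor k s)

lemma branchState_fst_pos (k : ℕ) : 0 < (branchState q t k).1 := by
  induction k with
  | zero => exact one_pos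
  | succ k ih => exact Nat.mul_pos ih (branchFactor_pos hq k ih)

lemma one_le_branchState_mul (k : ℕ) : 1 ≤ ((branchState q t (k + 1)).1 : ℝ) * q (k + 1) := by
  rw [branchState_succ_fst, mul_comm ((branchState q t k).1 : ℝ), mul_assoc]
  exact one_le_mul_of_ceil_inv_le (mul_pos (Nat.cast_pos.mpr (branchState_fst_pos hq k)) (hq _))
    (ceil_inv_le_branchFactor k _)

lemma branchState_mul_le_two {k : ℕ} (hb : (branchState q t k).2 = true) :
    ((branchState q t k).1 : ℝ) * q k ≤ 2 := by
  obtain _ | k := k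
  · simp [branchState] at hb
  simp only [branchState, Bool.and_eq_true, Bool.not_eq_true', decide_eq_true_eq] at hb
  rw [branchState_succ_fst, mul_comm ((branchState q t k).1 : ℝ), mul_assoc, branchFactor,
    if_neg (by simp [hb.1])]
  exact (ceil_inv_mul_le_max (mul_pos (Nat.cast_pos.mpr (branchState_fst_pos hq k)) (hq _))).trans
    (max_le le_rfl (by linarith [hb.2]))

include ht in
lemma one_le_branchState_succ_mul {k : ℕ} (hb : (branchState q t k).2 = true) :
    1 ≤ ((branchState q t (k + 1)).1 : ℝ) * t (k + 1) := by
  rw [branchState_succ_fst, mul_comm ((branchState q t k).1 : ℝ), mul_assoc]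
  refine one_le_mul_of_ceil_inv_le (mul_pos (Nat.cast_pos.mpr (branchState_fst_pos hq k)) (ht _)) ?_
  rw [branchFactor, if_pos hb]
  exact le_max_right _ _

lemma frequently_branchState_snd (hq0 : Tendsto q atTop (𝓝 0)) :
    ∃ᶠ k in atTop, (branchState q t k).2 = true := by
  rw [frequently_atTop]
  intro K
  by_contra! hK
  have hx : ∀ k ≥ K, 1 ≤ ((branchState q t k).1 : ℝ) * q (k + 1) := fun k hk => by
    simpa [branchState, hK k hk] using hK (k + 1) (by omega)
  have hconst : ∀ k ≥ K, (branchState q t k).1 = (branchState q t K).1 := by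
    intro k hk
    induction k, hk using Nat.le_induction with
    | base => rfl
    | succ k hk ih =>
      rw [← ih, ← Nat.cast_inj (R := ℝ), branchState_succ_fst, branchFactor,
        if_neg (by simpa using hK k hk), ceil_inv_eq_one (hx k hk), Nat.cast_one, mul_one]
  have hNK : (0 : ℝ) < (branchState q t K).1 := Nat.cast_pos.mpr (branchState_fst_pos hq K)
  obtain ⟨k, hqk, hk⟩ := ((hq0.comp (tendsto_add_atTop_nat 1) |>.eventually
    (gt_mem_nhds (inv_pos.mpr hNK))).and (eventually_ge_atTop K)).exists
  have hlt := mul_lt_mul_of_pos_left hqk hNK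
  rw [mul_inv_cancel₀ hNK.ne'] at hlt
  have := hx k hk
  rw [hconst k hk] at this
  exact hlt.not_ge this

include ht in
lemma branchState_succ_mul_le {C : ℝ} (hC : 0 ≤ C) (htq : ∀ k, t k ≤ C * q k)
    (hqa : Antitone q) (hta : Antitone t) (k : ℕ) :
    ((branchState q t (k + 1)).1 : ℝ) * t (k + 1) ≤
      max (((branchState q t k).1 : ℝ) * t k) (max 2 (2 * C)) := by
  set N : ℝ := ((branchState q t k).1 : ℝ)
  have hN : 0 < N := Nat.cast_pos.mpr (branchState_fst_pos hq k)
  have hx : 0 < N * q (k + 1) := mul_pos hN (hq _)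
  have hy : 0 < N * t (k + 1) := mul_pos hN (ht _)
  have hyx : N * t (k + 1) ≤ C * (N * q (k + 1)) := by
    nlinarith [mul_le_mul_of_nonneg_left (htq (k + 1)) hN.le]
  have key : N * q (k + 1) ≤ 2 → ⌈(N * q (k + 1))⁻¹⌉₊ * (N * t (k + 1)) ≤ 2 * C := fun hx2 =>
    calc _ ≤ ⌈(N * q (k + 1))⁻¹⌉₊ * (C * (N * q (k + 1))) := by gcongr
      _ = C * (⌈(N * q (k + 1))⁻¹⌉₊ * (N * q (k + 1))) := by ring
      _ ≤ C * max 2 (N * q (k + 1)) := by gcongr; exact ceil_inv_mul_le_max hx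
      _ = 2 * C := by rw [max_eq_left hx2, mul_comm]
  rw [branchState_succ_fst, mul_comm N, mul_assoc, branchFactor]
  split_ifs with hb
  · have hx2 : N * q (k + 1) ≤ 2 :=
      (mul_le_mul_of_nonneg_left (hqa k.le_succ) hN.le).trans (branchState_mul_le_two hq hb)
    rw [Nat.cast_max, max_mul_of_nonneg _ _ hy.le]
    refine le_max_of_le_right (max_le ((key hx2).trans (le_max_right _ _)) ?_)
    exact (ceil_inv_mul_le_max hy).trans (max_le_max le_rfl (hyx.trans (by nlinarith)))
  · rcases lt_or_ge (N * q (k + 1)) 1 with hx1 | hx1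
    · exact le_max_of_le_right ((key (by linarith)).trans (le_max_right _ _))
    · rw [ceil_inv_eq_one hx1, Nat.cast_one, one_mul]
      exact le_max_of_le_left (mul_le_mul_of_nonneg_left (hta k.le_succ) hN.le)

include ht in
lemma branchState_mul_le {C : ℝ} (hC : 0 ≤ C) (htq : ∀ k, t k ≤ C * q k)
    (hqa : Antitone q) (hta : Antitone t) (k : ℕ) :
    ((branchState q t k).1 : ℝ) * t k ≤ max (t 0) (max 2 (2 * C)) := by
  induction k with
  | zero => simp [branchState]
  | succ k ih =>
    exact (branchState_succ_mul_le hq ht hC htq hqa hta k).trans (max_le ih (le_max_right _ _))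

end Branching

theorem exists_branching {q t : ℕ → ℝ} {C : ℝ} (hq : ∀ k, 0 < q k) (ht : ∀ k, 0 < t k)
    (hC : 0 ≤ C) (htq : ∀ k, t k ≤ C * q k) (hqa : Antitone q) (hta : Antitone t)
    (hq0 : Tendsto q atTop (𝓝 0)) :
    ∃ n : ℕ → ℕ, (∀ k, 0 < n k) ∧
      (∀ᶠ k in atTop, 1 ≤ (cylCount n k : ℝ) * q k) ∧
      (∃ᶠ k in atTop, (cylCount n k : ℝ) * q k ≤ 2) ∧
      (∃ᶠ k in atTop, 1 ≤ (cylCount n k : ℝ) * t k) ∧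
      ∃ B, ∀ k, (cylCount n k : ℝ) * t k ≤ B := by
  refine ⟨fun j => branchFactor q t j (branchState q t j),
    fun k => branchFactor_pos hq k (branchState_fst_pos hq k), ?_, ?_, ?_, ?_⟩ <;>
    simp only [cylCount_branchFactor]
  · refine eventually_atTop.mpr ⟨1, fun k hk => ?_⟩
    obtain ⟨j, rfl⟩ := Nat.exists_eq_add_of_le' hk
    exact one_le_branchState_mul hq j
  · exact (frequently_branchState_snd hq hq0).mono fun k hk => branchState_mul_le_two hq hk
  · refine frequently_atTop.mpr fun K => ?_
    obtain ⟨k, hk, hb⟩ := frequently_atTop.mp (frequently_branchState_snd hq hq0) K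
    exact ⟨k + 1, by omega, one_le_branchState_succ_mul hq ht hb⟩
  · exact ⟨_, branchState_mul_le hq ht hC htq hqa hta⟩

/-- Main theorem: for Hausdorff functions `φ, ψ` with `ψ(2ε) ≤ C φ(ε)` and `φ(ε) → 0` as
`ε → 0`, there exists a compact product `K` with equilibrium state `μ` (a probability
measure) such that `D̄^φ_μ ⬝ H^φ(K) = 1 = D̲^ψ_μ ⬝ P^ψ(K)`; in particular the
`φ`-Hausdorff measure and the `ψ`-packing measure of `K` are finite and positive. -/
theorem stmt15 (φ ψ : ℝ → ℝ) (hφ : IsHausdorffFn φ) (hψ : IsHausdorffFn ψ)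
    (C : ℝ) (hC : 0 < C) (h : ∀ ε : ℝ, 0 < ε → ψ (2 * ε) ≤ C * φ ε)
    (hφ0 : Tendsto φ (𝓝[>] (0 : ℝ)) (𝓝 0)) :
    ∃ n : ℕ → ℕ, (∀ k, 0 < n k) ∧
      ∃ μ : Measure (∀ k, Fin (n k)), IsEquilibrium μ ∧ IsProbabilityMeasure μ ∧
        ∃ D₁ D₂ : ℝ≥0∞,
          (∀ x, upperDensK μ φ x = D₁) ∧ (∀ x, lowerDensK μ ψ x = D₂) ∧
          D₁ * HK φ (Set.univ : Set (∀ k, Fin (n k))) = 1 ∧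
          D₂ * PK ψ (Set.univ : Set (∀ k, Fin (n k))) = 1 ∧
          0 < HK φ (Set.univ : Set (∀ k, Fin (n k))) ∧
          HK φ (Set.univ : Set (∀ k, Fin (n k))) < ⊤ ∧
          0 < PK ψ (Set.univ : Set (∀ k, Fin (n k))) ∧
          PK ψ (Set.univ : Set (∀ k, Fin (n k))) < ⊤ := by
  obtain ⟨n, hn, hq1, hq2, ht1, B, ht2⟩ := exists_branching
    (q := fun k => φ (2⁻¹ ^ (k + 1))) (t := fun k => ψ (2⁻¹ ^ k))
    (fun _ => hφ.2.2.2 _ (by positivity)) (fun _ => hψ.2.2.2 _ (by positivity)) hC.le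
    (fun k => two_mul_two_inv_pow_succ k ▸ h _ (by positivity))
    (hφ.antitone_two_inv_pow.comp_monotone fun _ _ => Nat.succ_le_succ) hψ.antitone_two_inv_pow
    (hφ0.comp (tendsto_two_inv_pow_nhdsGT_zero.comp (tendsto_add_atTop_nat 1)))
  have : ∀ k, NeZero (n k) := fun k => ⟨(hn k).ne'⟩
  have hμ := isEquilibrium_equilibriumMeasure n
  have hH : liminf (hausdorffSeq n φ) atTop ∈ Set.Ioo 0 ⊤ := by
    unfold hausdorffSeq
    simpa only [levelGauge_eq_ofReal] using liminf_ofReal_mem_Ioo one_pos hq1 hq2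
  have hP : limsup (packingSeq n ψ) atTop ∈ Set.Ioo 0 ⊤ := by
    unfold packingSeq
    simpa only [levelGauge_eq_ofReal] using
      limsup_ofReal_mem_Ioo one_pos ht1 (.of_forall ht2)
  refine ⟨n, hn, equilibriumMeasure n, hμ, hμ.isProbabilityMeasure, _, _, hμ.upperDensK_eq hφ,
    hμ.lowerDensK_eq hψ, ?_⟩
  rw [hμ.HK_univ_eq hφ, hμ.PK_univ_eq hψ]
  exact ⟨ENNReal.inv_mul_cancel hH.1.ne' hH.2.ne, ENNReal.inv_mul_cancel hP.1.ne' hP.2.ne,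
    hH.1, hH.2, hP.1, hP.2⟩
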